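/- arXiv:2106.01799 — 2 statements merged into one kernel-verified Lean document; each statement's English description precedes it below -/
import Mathlib

section
/- For every real exponent p ≥ 1 and all nonnegative reals x, y, one has (x^p − y^p)(x − y) ≥ |x − y|^{p+1}. -/
/-! Superadditivity of `t ↦ t ^ p` on `[0, ∞)` for `p ≥ 1` gives `(x - y) ^ p ≤ x ^ p - y ^ p`
whenever `0 ≤ y ≤ x`; multiplying by `x - y` yields the inequality, and the symmetric case
follows by exchanging `x` and `y`. -/

namespace Real

lemma rpow_sub_le_rpow_sub_rpow {p x y : ℝ} (hp : 1 ≤ p) (hy : 0 ≤ y) (hyx : y ≤ x) :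
    (x - y) ^ p ≤ x ^ p - y ^ p := by
  have h := add_rpow_le_rpow_add (sub_nonneg.2 hyx) hy hp
  rw [sub_add_cancel] at h
  linarith

lemma sub_rpow_add_one_le_rpow_sub_rpow_mul_sub {p x y : ℝ} (hp : 1 ≤ p) (hy : 0 ≤ y)
    (hyx : y ≤ x) : (x - y) ^ (p + 1) ≤ (x ^ p - y ^ p) * (x - y) := by
  rw [rpow_add_one' (sub_nonneg.2 hyx) (by linarith)]
  exact mul_le_mul_of_nonneg_right (rpow_sub_le_rpow_sub_rpow hp hy hyx) (sub_nonneg.2 hyx)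

end Real

theorem pow_diff_mul_diff_ge_abs_pow (p x y : ℝ) (hp : 1 ≤ p)
    (hx : 0 ≤ x) (hy : 0 ≤ y) :
    (x ^ p - y ^ p) * (x - y) ≥ |x - y| ^ (p + 1) := by
  rcases le_total y x with hyx | hxy
  · rw [abs_of_nonneg (sub_nonneg.2 hyx)]
    exact Real.sub_rpow_add_one_le_rpow_sub_rpow_mul_sub hp hy hyx
  · rw [abs_sub_comm, abs_of_nonneg (sub_nonneg.2 hxy),
      show (x ^ p - y ^ p) * (x - y) = (y ^ p - x ^ p) * (y - x) by ring]
    exact Real.sub_rpow_add_one_le_rpow_sub_rpow_mul_sub hp hx hxy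
end

section
/- Let F : [0,∞) → [0,∞) be continuous with ∫₀^∞ F(τ) dτ < ∞, and suppose there is a constant C ≥ 0 such that F(t) ≤ F(s) + C·∫ₛᵗ F(τ) dτ for all 0 ≤ s ≤ t. Then F(t) → 0 as t → ∞. -/
/-!
Integrability of `F` makes the tail integrals `∫_s^∞ F` tend to `0`, and it prevents `F` from
staying above any `ε > 0` near infinity. So there are arbitrarily large `s` at which both `F s` and
`C ∫_s^∞ F` are below `ε / 2`. For `t ≥ s` the inequality then gives `F t < ε`.
-/

open MeasureTheory Filter Set

theorem frequently_norm_lt_of_integrableOn_Ioi {E : Type*} [NormedAddCommGroup E] {f : ℝ → E}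
    {a ε : ℝ} (hf : IntegrableOn f (Ioi a)) (hε : 0 < ε) : ∃ᶠ x in atTop, ‖f x‖ < ε := by
  intro hlarge
  obtain ⟨b, hb⟩ := eventually_atTop.1 hlarge
  have hsub : Ioi (max a b) ⊆ Ioi a := Ioi_subset_Ioi (le_max_left a b)
  have hconst : IntegrableOn (fun _ ↦ ε) (Ioi (max a b)) := by
    refine (hf.mono_set hsub).norm.mono' aestronglyMeasurable_const ?_
    filter_upwards [ae_restrict_mem measurableSet_Ioi] with x hx
    rw [Real.norm_of_nonneg hε.le]
    exact not_lt.1 (hb x (le_max_right a b |>.trans hx.le))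
  simp [integrableOn_const_iff, hε.ne'] at hconst

theorem intervalIntegral_le_integral_Ioi {f : ℝ → ℝ} {s t : ℝ} (hst : s ≤ t)
    (hf : IntegrableOn f (Ioi s)) (hf_nonneg : ∀ x ∈ Ioi s, 0 ≤ f x) :
    ∫ x in s..t, f x ≤ ∫ x in Ioi s, f x := by
  rw [intervalIntegral.integral_of_le hst]
  exact setIntegral_mono_set hf ((ae_restrict_mem measurableSet_Ioi).mono hf_nonneg)
    (Ioc_subset_Ioi_self.eventuallyLE)

theorem tendsto_zero_of_integral_inequality_general (F : ℝ → ℝ) (C : ℝ) (hC : 0 ≤ C)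
    (hnonneg : ∀ t ∈ Set.Ici (0 : ℝ), 0 ≤ F t)
    (hint : IntegrableOn F (Set.Ici 0))
    (hineq : ∀ s t : ℝ, 0 ≤ s → s ≤ t → F t ≤ F s + C * ∫ τ in s..t, F τ) :
    Tendsto F atTop (nhds 0) := by
  refine tendsto_order.2 ⟨fun a ha ↦ ?_, fun ε hε ↦ ?_⟩
  · filter_upwards [eventually_ge_atTop 0] with t ht using ha.trans_le (hnonneg t ht)
  have htail : ∀ᶠ s in atTop, C * ∫ x in Ioi s, F x < ε / 2 := by
    have := (tendsto_integral_Ioi_zero (f := F) (μ := volume) tendsto_id).const_mul C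
    rw [mul_zero] at this
    exact this.eventually (gt_mem_nhds (half_pos hε))
  have hsmall : ∃ᶠ s in atTop, ‖F s‖ < ε / 2 :=
    frequently_norm_lt_of_integrableOn_Ioi (hint.mono_set Ioi_subset_Ici_self) (half_pos hε)
  obtain ⟨s, ⟨hCs, hs0⟩, hFs⟩ := ((htail.and (eventually_ge_atTop 0)).and_frequently hsmall).exists
  have hint_s : IntegrableOn F (Ioi s) := hint.mono_set (Ioi_subset_Ici hs0)
  filter_upwards [eventually_ge_atTop s] with t hst
  calc F t ≤ F s + C * ∫ τ in s..t, F τ := hineq s t hs0 hst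
    _ ≤ ‖F s‖ + C * ∫ τ in Ioi s, F τ := by
      gcongr
      · exact Real.le_norm_self _
      · exact intervalIntegral_le_integral_Ioi hst hint_s fun x hx ↦ hnonneg x (hs0.trans hx.le)
    _ < ε / 2 + ε / 2 := add_lt_add hFs hCs
    _ = ε := add_halves ε

theorem tendsto_zero_of_integral_inequality (F : ℝ → ℝ) (C : ℝ) (hC : 0 ≤ C)
    (hcont : ContinuousOn F (Set.Ici 0))
    (hnonneg : ∀ t ∈ Set.Ici (0 : ℝ), 0 ≤ F t)
    (hint : IntegrableOn F (Set.Ici 0))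
    (hineq : ∀ s t : ℝ, 0 ≤ s → s ≤ t → F t ≤ F s + C * ∫ τ in s..t, F τ) :
    Tendsto F atTop (nhds 0) :=
  tendsto_zero_of_integral_inequality_general F C hC hnonneg hint hineq
end
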